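/- With the magmatic pair ⟨⟨x,y⟩⟩ = pr(x ∪ c₀) ∪ pr(y ∪ c₁) (under the tag-incomparability and data/tag disjointness hypotheses), one has ⟨⟨x',y'⟩⟩ ⊆ ⟨⟨x,y⟩⟩ if and only if x' ⊆ x and y' ⊆ y. -/

import Mathlib

/-!
Everything reduces to one remark: a set disjoint from `c` that lies in `u ∪ c` lies in `u`.
If `⟨⟨x', y'⟩⟩ ⊆ ⟨⟨x, y⟩⟩`, the top element `x' ∪ c₀` of the left side lies in `pr (x ∪ c₀)`
or in `pr (y ∪ c₁)`. In the first case the remark gives `x' ⊆ x`; in the second it gives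
`c₀ ⊆ c₁` (as `c₀` is disjoint from `y`), which is excluded. The same holds for `y'` by symmetry.
-/

def pr {α : Type*} (w : Set α) : Set (Set α) := {z | z ⊆ w}

def mpair {α : Type*} (c₀ c₁ x y : Set α) : Set (Set α) :=
  pr (x ∪ c₀) ∪ pr (y ∪ c₁)

section

variable {α : Type*} {c₀ c₁ x y x' y' : Set α}

lemma mem_pr_self (w : Set α) : w ∈ pr w := Set.Subset.rfl

lemma pr_mono {v w : Set α} (h : v ⊆ w) : pr v ⊆ pr w := fun _ hz => hz.trans h

lemma mpair_comm : mpair c₀ c₁ x y = mpair c₁ c₀ y x := Set.union_comm _ _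

lemma mpair_mono (hx : x' ⊆ x) (hy : y' ⊆ y) : mpair c₀ c₁ x' y' ⊆ mpair c₀ c₁ x y :=
  Set.union_subset_union (pr_mono (Set.union_subset_union_left _ hx))
    (pr_mono (Set.union_subset_union_left _ hy))

lemma subset_of_pr_subset_mpair (hc : ¬ c₀ ⊆ c₁) (hy : Disjoint y c₀) (hx' : Disjoint x' c₀)
    (h : pr (x' ∪ c₀) ⊆ mpair c₀ c₁ x y) : x' ⊆ x := by
  rcases h (mem_pr_self _) with hx | hy'
  · exact hx'.subset_left_of_subset_union (Set.subset_union_left.trans hx)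
  · exact absurd (hy.symm.subset_right_of_subset_union (Set.subset_union_right.trans hy')) hc

end

theorem mpair_subset_iff {α : Type*} (c₀ c₁ : Set α)
    (hc₀ : ¬ c₀ ⊆ c₁) (hc₁ : ¬ c₁ ⊆ c₀)
    (x y x' y' : Set α)
    (hdata : ∀ d ∈ ({x, y, x', y'} : Set (Set α)),
      Disjoint d c₀ ∧ Disjoint d c₁ ∧ ¬ d ⊆ c₀ ∧ ¬ d ⊆ c₁ ∧
      ¬ c₀ ⊆ d ∧ ¬ c₁ ⊆ d) :
    mpair c₀ c₁ x' y' ⊆ mpair c₀ c₁ x y ↔ x' ⊆ x ∧ y' ⊆ y := by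
  obtain ⟨-, hx₁, -⟩ := hdata x (by simp)
  obtain ⟨hy₀, -⟩ := hdata y (by simp)
  obtain ⟨hx'₀, -⟩ := hdata x' (by simp)
  obtain ⟨-, hy'₁, -⟩ := hdata y' (by simp)
  refine ⟨fun h => ⟨?_, ?_⟩, fun ⟨hx, hy⟩ => mpair_mono hx hy⟩
  · exact subset_of_pr_subset_mpair hc₀ hy₀ hx'₀ (Set.subset_union_left.trans h)
  · rw [mpair_comm, mpair_comm (x := x)] at h
    exact subset_of_pr_subset_mpair hc₁ hx₁ hy'₁ (Set.subset_union_left.trans h)
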